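/- Let X^{(1)},…,X^{(m)} be n×n complex matrices, and let W be the mn×mn block matrix with blocks W_{α,α+1} = n^{-1/2}X^{(α)} for α = 1,…,m−1, W_{m,1} = n^{-1/2}X^{(m)}, and all other blocks zero. Then the eigenvalues of W^m are exactly the eigenvalues λ_1(X),…,λ_n(X) of the product matrix X = n^{-m/2} X^{(1)} X^{(2)} ··· X^{(m)}, each with multiplicity m; equivalently, the characteristic polynomial of W^m equals the m-th power of the characteristic polynomial of X. -/
import Mathlib

noncomputable section

/-- Cyclic successor in `Fin m`. -/
def cyclicSucc {m : ℕ} (hm : 0 < m) (α : Fin m) : Fin m :=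
  ⟨(α.1 + 1) % m, Nat.mod_lt _ hm⟩

/-- The `mn × mn` linearizing block matrix `W`: block `(α, α+1 (mod m))` equals
`n^{-1/2} X^{(α)}`, all other blocks vanish.  Rows and columns are indexed by
`Fin m × Fin n`, the first coordinate being the block index. -/
def linBlockMatrix {m n : ℕ} (hm : 0 < m) (X : Fin m → Matrix (Fin n) (Fin n) ℂ) :
    Matrix (Fin m × Fin n) (Fin m × Fin n) ℂ :=
  fun p q =>
    if q.1 = cyclicSucc hm p.1 then ((Real.sqrt n : ℝ) : ℂ)⁻¹ * X p.1 p.2 q.2 else 0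

/-- The normalized product matrix `X = n^{-m/2} X^{(1)} X^{(2)} ⋯ X^{(m)}` (each factor
carries a normalization `n^{-1/2}`). -/
def normalizedProduct {m n : ℕ} (X : Fin m → Matrix (Fin n) (Fin n) ℂ) :
    Matrix (Fin n) (Fin n) ℂ :=
  (List.ofFn fun q : Fin m => ((Real.sqrt n : ℝ) : ℂ)⁻¹ • X q).prod

open Matrix Polynomial

namespace LinAux

variable {n m : ℕ}

lemma eval_charpoly (M : Matrix (Fin n) (Fin n) ℂ) (t : ℂ) :
    (M.charpoly).eval t = (t • (1 : Matrix (Fin n) (Fin n) ℂ) - M).det := by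
  rw [Matrix.charpoly, ← Polynomial.coe_evalRingHom, RingHom.map_det]
  congr 1
  ext i j
  rcases eq_or_ne i j with h | h
  · subst h; simp [Matrix.charmatrix_apply_eq, Matrix.one_apply]
  · simp [Matrix.charmatrix_apply_ne _ _ _ h, Matrix.one_apply, h]

lemma charpoly_mul_comm (A B : Matrix (Fin n) (Fin n) ℂ) :
    (A * B).charpoly = (B * A).charpoly := by
  apply Polynomial.eq_of_infinite_eval_eq
  apply Set.Infinite.mono (s := {(0 : ℂ)}ᶜ)
  · intro t ht
    have ht0 : t ≠ 0 := ht
    have key : (1 : Matrix (Fin n) (Fin n) ℂ) - (t⁻¹ • A) * B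
        = t⁻¹ • (t • 1 - A * B) := by
      rw [smul_sub, smul_smul, inv_mul_cancel₀ ht0, one_smul, Matrix.smul_mul]
    have key' : (1 : Matrix (Fin n) (Fin n) ℂ) - B * (t⁻¹ • A)
        = t⁻¹ • (t • 1 - B * A) := by
      rw [smul_sub, smul_smul, inv_mul_cancel₀ ht0, one_smul, Matrix.mul_smul]
    have h := Matrix.det_one_sub_mul_comm (t⁻¹ • A) B
    rw [key, key', Matrix.det_smul, Matrix.det_smul] at h
    have hpow : (t⁻¹ : ℂ) ^ Fintype.card (Fin n) ≠ 0 := pow_ne_zero _ (inv_ne_zero ht0)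
    simp only [Set.mem_setOf_eq, eval_charpoly]
    exact mul_left_cancel₀ hpow h
  · exact (Set.finite_singleton 0).infinite_compl

/-- Cyclic addition in `Fin m`. -/
def cAdd (hm : 0 < m) (α : Fin m) (k : ℕ) : Fin m := ⟨(α.1 + k) % m, Nat.mod_lt _ hm⟩

lemma cAdd_zero (hm : 0 < m) (α : Fin m) : cAdd hm α 0 = α := by
  simp [cAdd, Nat.mod_eq_of_lt α.2]

lemma cAdd_succ (hm : 0 < m) (α : Fin m) (k : ℕ) :
    cAdd hm (cyclicSucc hm α) k = cAdd hm α (k + 1) := by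
  simp only [cAdd, cyclicSucc]
  congr 1
  rw [Nat.mod_add_mod]
  congr 1
  omega

lemma cAdd_self (hm : 0 < m) (α : Fin m) : cAdd hm α m = α := by
  simp [cAdd, Nat.add_mod_right, Nat.mod_eq_of_lt α.2]

/-- Partial cyclic product of `Y` starting at block `α`. -/
def prodFrom (hm : 0 < m) (Y : Fin m → Matrix (Fin n) (Fin n) ℂ) (α : Fin m) :
    ℕ → Matrix (Fin n) (Fin n) ℂ
  | 0 => 1
  | k + 1 => Y α * prodFrom hm Y (cyclicSucc hm α) k

lemma prodFrom_succ_right (hm : 0 < m) (Y : Fin m → Matrix (Fin n) (Fin n) ℂ) (k : ℕ) :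
    ∀ α, prodFrom hm Y α (k + 1) = prodFrom hm Y α k * Y (cAdd hm α k) := by
  induction k with
  | zero => intro α; simp [prodFrom, cAdd_zero]
  | succ k ih =>
    intro α
    show Y α * prodFrom hm Y (cyclicSucc hm α) (k + 1) = _
    rw [ih (cyclicSucc hm α), cAdd_succ, ← mul_assoc]
    rfl

lemma pow_apply (hm : 0 < m) (X : Fin m → Matrix (Fin n) (Fin n) ℂ) (k : ℕ)
    (p q : Fin m × Fin n) :
    (linBlockMatrix hm X ^ k) p q =
      if q.1 = cAdd hm p.1 k then
        prodFrom hm (fun α => ((Real.sqrt n : ℝ) : ℂ)⁻¹ • X α) p.1 k p.2 q.2 else 0 := by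
  induction k generalizing p with
  | zero =>
    obtain ⟨a, i⟩ := p; obtain ⟨b, j⟩ := q
    simp only [pow_zero, cAdd_zero, prodFrom]
    rcases eq_or_ne b a with h1 | h1
    · subst h1
      simp [Matrix.one_apply, Prod.ext_iff]
    · simp [Matrix.one_apply, Prod.ext_iff, h1, Ne.symm h1]
  | succ k ih =>
    rw [pow_succ']
    rw [Matrix.mul_apply, Fintype.sum_prod_type]
    simp only [linBlockMatrix, ih, ite_mul, zero_mul]
    rw [Finset.sum_comm]
    simp only [Finset.sum_ite_eq', Finset.mem_univ, if_true]
    rw [cAdd_succ]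
    by_cases h : q.1 = cAdd hm p.1 (k + 1)
    · simp only [h, if_true]
      have : prodFrom hm (fun α => ((Real.sqrt n : ℝ) : ℂ)⁻¹ • X α) p.1 (k + 1)
          = (fun α => ((Real.sqrt n : ℝ) : ℂ)⁻¹ • X α) p.1 *
            prodFrom hm (fun α => ((Real.sqrt n : ℝ) : ℂ)⁻¹ • X α) (cyclicSucc hm p.1) k := rfl
      rw [this, Matrix.mul_apply]
      refine Finset.sum_congr rfl fun l _ => ?_
      simp [Matrix.smul_apply, smul_eq_mul]
    · simp [h]

lemma pow_m_eq (hm : 0 < m) (X : Fin m → Matrix (Fin n) (Fin n) ℂ) :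
    linBlockMatrix hm X ^ m =
      (Matrix.reindex (Equiv.prodComm (Fin n) (Fin m)) (Equiv.prodComm (Fin n) (Fin m)))
        (Matrix.blockDiagonal fun α =>
          prodFrom hm (fun β => ((Real.sqrt n : ℝ) : ℂ)⁻¹ • X β) α m) := by
  ext ⟨a, i⟩ ⟨b, j⟩
  rw [pow_apply, cAdd_self]
  simp only [Matrix.reindex_apply, Matrix.submatrix_apply, Equiv.prodComm_symm,
    Equiv.prodComm_apply, Prod.swap_prod_mk, Matrix.blockDiagonal_apply]
  by_cases h : b = a
  · subst h; simp
  · simp [h, Ne.symm h]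

lemma charpoly_blockDiagonal (M : Fin m → Matrix (Fin n) (Fin n) ℂ) :
    (Matrix.blockDiagonal M).charpoly = ∏ α, (M α).charpoly := by
  unfold Matrix.charpoly
  rw [show Matrix.charmatrix (Matrix.blockDiagonal M)
      = Matrix.blockDiagonal fun α => Matrix.charmatrix (M α) from ?_,
    Matrix.det_blockDiagonal]
  ext ⟨i, a⟩ ⟨j, b⟩
  by_cases h : a = b
  · subst h
    by_cases h2 : i = j
    · subst h2
      simp [Matrix.charmatrix_apply_eq, Matrix.blockDiagonal_apply, Matrix.charmatrix_apply]
    · have : ((i, a) : Fin n × Fin m) ≠ (j, a) := by simp [h2]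
      rw [Matrix.charmatrix_apply_ne _ _ _ this]
      simp [Matrix.blockDiagonal_apply, Matrix.charmatrix_apply_ne _ _ _ h2]
  · have : ((i, a) : Fin n × Fin m) ≠ (j, b) := by simp [h]
    rw [Matrix.charmatrix_apply_ne _ _ _ this]
    simp [Matrix.blockDiagonal_apply, h]

lemma charpoly_prodFrom_rotate (hm : 0 < m) (Y : Fin m → Matrix (Fin n) (Fin n) ℂ)
    (α : Fin m) :
    (prodFrom hm Y α m).charpoly = (prodFrom hm Y (cyclicSucc hm α) m).charpoly := by
  obtain ⟨k, rfl⟩ : ∃ k, m = k + 1 := ⟨m - 1, by omega⟩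
  have h1 : prodFrom hm Y α (k + 1) = Y α * prodFrom hm Y (cyclicSucc hm α) k := rfl
  have h2 : prodFrom hm Y (cyclicSucc hm α) (k + 1)
      = prodFrom hm Y (cyclicSucc hm α) k * Y α := by
    rw [prodFrom_succ_right]
    congr 2
    rw [cAdd_succ, cAdd_self]
  rw [h1, h2, charpoly_mul_comm]

lemma charpoly_prodFrom_const (hm : 0 < m) (Y : Fin m → Matrix (Fin n) (Fin n) ℂ)
    (α : Fin m) :
    (prodFrom hm Y α m).charpoly = (prodFrom hm Y ⟨0, hm⟩ m).charpoly := by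
  obtain ⟨a, ha⟩ := α
  induction a with
  | zero => rfl
  | succ a ih =>
    have ha' : a < m := Nat.lt_of_succ_lt ha
    have : (⟨a + 1, ha⟩ : Fin m) = cyclicSucc hm ⟨a, ha'⟩ := by
      simp [cyclicSucc, Nat.mod_eq_of_lt ha]
    rw [this, ← charpoly_prodFrom_rotate, ih ha']

lemma prodFrom_eq_list (hm : 0 < m) (Y : Fin m → Matrix (Fin n) (Fin n) ℂ) :
    ∀ (k a : ℕ) (ha : a < m) (hak : a + k ≤ m),
      prodFrom hm Y ⟨a, ha⟩ k
        = (List.ofFn fun j : Fin k => Y ⟨a + j.1, by omega⟩).prod := by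
  intro k
  induction k with
  | zero => intro a ha _; simp [prodFrom]
  | succ k ih =>
    intro a ha hak
    rw [List.ofFn_succ, List.prod_cons]
    show Y ⟨a, ha⟩ * prodFrom hm Y (cyclicSucc hm ⟨a, ha⟩) k = _
    have hhead : Y ⟨a, ha⟩ = Y (⟨a + ((0 : Fin (k + 1)) : ℕ), by omega⟩ : Fin m) := by
      congr 1
    rw [← hhead]
    congr 1
    cases k with
    | zero => simp [prodFrom]
    | succ k' =>
      have ha1 : a + 1 < m := by omega
      have hcs : cyclicSucc hm ⟨a, ha⟩ = ⟨a + 1, ha1⟩ := by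
        apply Fin.ext
        show (a + 1) % m = a + 1
        exact Nat.mod_eq_of_lt ha1
      rw [hcs, ih (a + 1) ha1 (by omega)]
      refine congrArg List.prod (congrArg List.ofFn (funext fun j => ?_))
      refine congrArg Y (Fin.ext ?_)
      simp only [Fin.val_succ, Fin.val_mk]
      omega

lemma normalizedProduct_eq (hm : 0 < m) (X : Fin m → Matrix (Fin n) (Fin n) ℂ) :
    normalizedProduct X
      = prodFrom hm (fun β => ((Real.sqrt n : ℝ) : ℂ)⁻¹ • X β) ⟨0, hm⟩ m := by
  rw [prodFrom_eq_list hm _ m 0 hm (by omega)]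
  unfold normalizedProduct
  refine congrArg List.prod (congrArg List.ofFn (funext fun j => ?_))
  show ((Real.sqrt n : ℝ) : ℂ)⁻¹ • X j = ((Real.sqrt n : ℝ) : ℂ)⁻¹ • X ⟨0 + j.1, by omega⟩
  refine congrArg _ (congrArg X (Fin.ext ?_))
  simp

end LinAux

/-- **Linearization.**  The eigenvalues of `W^m` are exactly the eigenvalues of the product
matrix `X = n^{-m/2} X^{(1)} ⋯ X^{(m)}`, each with multiplicity `m`: the characteristic
polynomial of `W^m` equals the `m`-th power of the characteristic polynomial of `X`. -/
theorem charpoly_pow_linearization {m n : ℕ} (hm : 0 < m)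
    (X : Fin m → Matrix (Fin n) (Fin n) ℂ) :
    (linBlockMatrix hm X ^ m).charpoly = (normalizedProduct X).charpoly ^ m := by
  rw [LinAux.pow_m_eq hm X, Matrix.charpoly_reindex, LinAux.charpoly_blockDiagonal]
  rw [LinAux.normalizedProduct_eq hm X]
  calc (∏ α, (LinAux.prodFrom hm (fun β => ((Real.sqrt n : ℝ) : ℂ)⁻¹ • X β) α m).charpoly)
      = ∏ _α : Fin m,
        (LinAux.prodFrom hm (fun β => ((Real.sqrt n : ℝ) : ℂ)⁻¹ • X β) ⟨0, hm⟩ m).charpoly := by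
        exact Finset.prod_congr rfl fun α _ => LinAux.charpoly_prodFrom_const hm _ α
    _ = _ := by rw [Finset.prod_const, Finset.card_univ, Fintype.card_fin]
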